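/- Let δ ≥ 1 and r ≥ 1 be integers, let γ₀, γ₁, …, γ_{r−1} be positive integers, and let c be a natural number. For j ∈ {0, …, δ−1} define f(j) = γ_i where i is the least index with δ not dividing j·γ_i, if such an index exists, and f(j) = c otherwise. Setting g₋₁ = δ and g_k = gcd(γ₀, …, γ_k, δ) for 0 ≤ k ≤ r−1, one has Σ_{j=0}^{δ−1} f(j) = Σ_{k=0}^{r−1} (g_{k−1} − g_k)·γ_k + g_{r−1}·c. -/
import Mathlib


/-- The sequence of successive gcds: `gseq γ δ 0 = δ` (this is `g₋₁`) and
`gseq γ δ (k+1) = gcd (γ k) (gseq γ δ k)`, so that `gseq γ δ (k+1) = gcd(γ₀, …, γ_k, δ)`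
(this is `g_k`). -/
def gseq (γ : ℕ → ℕ) (δ : ℕ) : ℕ → ℕ
  | 0 => δ
  | k + 1 => Nat.gcd (γ k) (gseq γ δ k)

lemma gseq_dvd (γ : ℕ → ℕ) (δ : ℕ) : ∀ k, gseq γ δ k ∣ δ
  | 0 => dvd_rfl
  | k + 1 => (Nat.gcd_dvd_right _ _).trans (gseq_dvd γ δ k)

lemma gseq_pos (γ : ℕ → ℕ) {δ : ℕ} (hδ : 0 < δ) (k : ℕ) : 0 < gseq γ δ k := by
  induction k with
  | zero => exact hδ
  | succ k ih => exact Nat.gcd_pos_of_pos_right _ ih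

lemma dvd_mul_gseq_iff (γ : ℕ → ℕ) (δ : ℕ) (j : ℕ) :
    ∀ r, (δ ∣ j * gseq γ δ r) ↔ ∀ i, i < r → δ ∣ j * γ i := by
  intro r
  induction r with
  | zero => simp [gseq]
  | succ r ih =>
    have hh : j * gseq γ δ (r+1) = Nat.gcd (j * γ r) (j * gseq γ δ r) := by
      rw [show gseq γ δ (r+1) = Nat.gcd (γ r) (gseq γ δ r) from rfl, Nat.gcd_mul_left]
    rw [hh]
    constructor
    · intro h i hi
      rcases Nat.lt_succ_iff_lt_or_eq.mp hi with h' | h'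
      · exact (ih.mp (h.trans (Nat.gcd_dvd_right _ _))) i h'
      · subst h'; exact h.trans (Nat.gcd_dvd_left _ _)
    · intro h
      exact Nat.dvd_gcd (h r (Nat.lt_succ_self r))
        (ih.mpr fun i hi => h i (hi.trans (Nat.lt_succ_self r)))

lemma card_filter_dvd {δ g : ℕ} (hδ : 0 < δ) (hg : g ∣ δ) (hgpos : 0 < g) :
    ((Finset.range δ).filter (fun j => δ ∣ j * g)).card = g := by
  set d := δ / g with hd
  have hdpos : 0 < d := Nat.div_pos (Nat.le_of_dvd hδ hg) hgpos
  have hdg : d * g = δ := Nat.div_mul_cancel hg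
  have hiff : ∀ j, (δ ∣ j * g ↔ d ∣ j) := by
    intro j
    rw [← hdg]
    exact ⟨fun h => (Nat.mul_dvd_mul_iff_right hgpos).mp h,
           fun h => Nat.mul_dvd_mul_right h g⟩
  have himg : (Finset.range δ).filter (fun j => δ ∣ j * g)
      = (Finset.range g).image (fun k => k * d) := by
    ext j
    simp only [Finset.mem_filter, Finset.mem_range, Finset.mem_image, hiff]
    constructor
    · rintro ⟨hjδ, hdj⟩
      refine ⟨j / d, ?_, Nat.div_mul_cancel hdj⟩
      rw [Nat.div_lt_iff_lt_mul hdpos]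
      calc j < δ := hjδ
        _ = g * d := by rw [mul_comm]; exact hdg.symm
    · rintro ⟨k, hk, rfl⟩
      exact ⟨by calc k * d < g * d := (Nat.mul_lt_mul_right hdpos).mpr hk
                  _ = δ := by rw [mul_comm]; exact hdg,
             Dvd.intro_left k rfl⟩
  rw [himg, Finset.card_image_of_injective _
    (fun a b hab => Nat.eq_of_mul_eq_mul_right hdpos hab), Finset.card_range]

lemma sum_aux (δ : ℕ) (γ : ℕ → ℕ) (hδ : 0 < δ) :
    ∀ (r c : ℕ),
    ∑ j ∈ Finset.range δ,
        (if h : ∃ i, i < r ∧ ¬ δ ∣ j * γ i then γ (Nat.find h) else c)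
      = ∑ k ∈ Finset.range r, (gseq γ δ k - gseq γ δ (k + 1)) * γ k
        + gseq γ δ r * c := by
  intro r
  induction r with
  | zero => intro c; simp [gseq, mul_comm]
  | succ r ih =>
    intro c
    have hterm : ∀ j,
        (if h : ∃ i, i < r + 1 ∧ ¬ δ ∣ j * γ i then γ (Nat.find h) else c)
        = (if h : ∃ i, i < r ∧ ¬ δ ∣ j * γ i then γ (Nat.find h) else 0)
          + ((if δ ∣ j * gseq γ δ (r+1) then c else 0)
             + (if δ ∣ j * gseq γ δ r ∧ ¬ δ ∣ j * gseq γ δ (r+1) then γ r else 0)) := by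
      intro j
      by_cases hp : ∃ i, i < r ∧ ¬ δ ∣ j * γ i
      · have hq : ∃ i, i < r + 1 ∧ ¬ δ ∣ j * γ i :=
          ⟨hp.choose, hp.choose_spec.1.trans (Nat.lt_succ_self r), hp.choose_spec.2⟩
        have hng : ¬ δ ∣ j * gseq γ δ r := by
          rw [dvd_mul_gseq_iff]
          push_neg
          obtain ⟨i, hi, hnd⟩ := hp
          exact ⟨i, hi, hnd⟩
        have hng2 : ¬ δ ∣ j * gseq γ δ (r+1) := by
          rw [dvd_mul_gseq_iff]
          push_neg
          obtain ⟨i, hi, hnd⟩ := hp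
          exact ⟨i, hi.trans (Nat.lt_succ_self r), hnd⟩
        have hng1 : ¬ (δ ∣ j * gseq γ δ r ∧ ¬ δ ∣ j * gseq γ δ (r+1)) := fun h => hng h.1
        rw [dif_pos hp, dif_pos hq, if_neg hng2, if_neg hng1]
        have hfind : Nat.find hq = Nat.find hp := by
          apply le_antisymm
          · exact Nat.find_le ⟨(Nat.find_spec hp).1.trans (Nat.lt_succ_self r),
              (Nat.find_spec hp).2⟩
          · have h1 : Nat.find hq < r :=
              lt_of_le_of_lt
                (Nat.find_le ⟨hp.choose_spec.1.trans (Nat.lt_succ_self r), hp.choose_spec.2⟩)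
                hp.choose_spec.1
            exact Nat.find_le ⟨h1, (Nat.find_spec hq).2⟩
        rw [hfind]; omega
      · have hall : ∀ i, i < r → δ ∣ j * γ i := by
          intro i hi
          by_contra hc
          exact hp ⟨i, hi, hc⟩
        have hg : δ ∣ j * gseq γ δ r := (dvd_mul_gseq_iff γ δ j r).mpr hall
        by_cases hrr : δ ∣ j * γ r
        · have hq : ¬ ∃ i, i < r + 1 ∧ ¬ δ ∣ j * γ i := by
            rintro ⟨i, hi, hnd⟩
            rcases Nat.lt_succ_iff_lt_or_eq.mp hi with h | h
            · exact hnd (hall i h)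
            · exact hnd (h ▸ hrr)
          have hg1 : δ ∣ j * gseq γ δ (r+1) :=
            (dvd_mul_gseq_iff γ δ j (r+1)).mpr (fun i hi => by
              rcases Nat.lt_succ_iff_lt_or_eq.mp hi with h | h
              · exact hall i h
              · exact h ▸ hrr)
          rw [dif_neg hq, dif_neg hp, if_pos hg1, if_neg (fun h => h.2 hg1)]; omega
        · have hq : ∃ i, i < r + 1 ∧ ¬ δ ∣ j * γ i := ⟨r, Nat.lt_succ_self r, hrr⟩
          have hng1 : ¬ δ ∣ j * gseq γ δ (r+1) := fun h =>
            hrr ((dvd_mul_gseq_iff γ δ j (r+1)).mp h r (Nat.lt_succ_self r))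
          have hfind : Nat.find hq = r := by
            have h1 := Nat.find_spec hq
            have h2 : ¬ Nat.find hq < r := fun h => h1.2 (hall _ h)
            omega
          rw [dif_neg hp, dif_pos hq, hfind, if_neg hng1, if_pos ⟨hg, hng1⟩]
          omega
    rw [Finset.sum_congr rfl (fun j _ => hterm j), Finset.sum_add_distrib, ih 0,
        Finset.sum_add_distrib]
    have h1 : ∑ j ∈ Finset.range δ, (if δ ∣ j * gseq γ δ (r+1) then c else 0)
        = gseq γ δ (r+1) * c := by
      rw [← Finset.sum_filter, Finset.sum_const,
        card_filter_dvd hδ (gseq_dvd γ δ (r+1)) (gseq_pos γ hδ (r+1)), smul_eq_mul]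
    have hsub : (Finset.range δ).filter
          (fun j => δ ∣ j * gseq γ δ r ∧ ¬ δ ∣ j * gseq γ δ (r+1))
        = (Finset.range δ).filter (fun j => δ ∣ j * gseq γ δ r)
          \ (Finset.range δ).filter (fun j => δ ∣ j * gseq γ δ (r+1)) := by
      ext j
      simp only [Finset.mem_filter, Finset.mem_sdiff, Finset.mem_range]
      tauto
    have hmono : (Finset.range δ).filter (fun j => δ ∣ j * gseq γ δ (r+1))
        ⊆ (Finset.range δ).filter (fun j => δ ∣ j * gseq γ δ r) := by
      intro j hj
      simp only [Finset.mem_filter, Finset.mem_range] at hj ⊢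
      refine ⟨hj.1, ?_⟩
      rw [dvd_mul_gseq_iff] at hj ⊢
      exact fun i hi => hj.2 i (hi.trans (Nat.lt_succ_self r))
    have h2 : ∑ j ∈ Finset.range δ,
          (if δ ∣ j * gseq γ δ r ∧ ¬ δ ∣ j * gseq γ δ (r+1) then γ r else 0)
        = (gseq γ δ r - gseq γ δ (r+1)) * γ r := by
      rw [← Finset.sum_filter, Finset.sum_const, hsub, Finset.card_sdiff_of_subset hmono,
        card_filter_dvd hδ (gseq_dvd γ δ r) (gseq_pos γ hδ r),
        card_filter_dvd hδ (gseq_dvd γ δ (r+1)) (gseq_pos γ hδ (r+1)), smul_eq_mul]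
    rw [h1, h2, Finset.sum_range_succ]
    ring

/-- Let `δ ≥ 1`, `r ≥ 1`, `γ₀, …, γ_{r−1}` positive integers and `c ∈ ℕ`.
For `j ∈ {0, …, δ−1}` let `f(j) = γ_i` where `i` is the least index `< r` with
`δ ∤ j·γ_i` if such an index exists, and `f(j) = c` otherwise. Then
`Σ_{j=0}^{δ−1} f(j) = Σ_{k=0}^{r−1} (g_{k−1} − g_k)·γ_k + g_{r−1}·c`. -/
theorem sum_degrees_eq (δ r c : ℕ) (γ : ℕ → ℕ)
    (hδ : 1 ≤ δ) (hr : 1 ≤ r)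
    (hγ : ∀ i, i < r → 1 ≤ γ i) :
    ∑ j ∈ Finset.range δ,
        (if h : ∃ i, i < r ∧ ¬ δ ∣ j * γ i then γ (Nat.find h) else c)
      = ∑ k ∈ Finset.range r, (gseq γ δ k - gseq γ δ (k + 1)) * γ k
        + gseq γ δ r * c := by
  exact sum_aux δ γ hδ r c
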